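/- Let α ∈ (0, 1/2), for each positive integer n let t_n* ∈ (0, n) be the unique solution of P_n(t_n*) = α. Then lim_{n→∞} (1/n)·log V_n(t_n*) = h_max(α); i.e., the logarithm of the maximum shaping gain V_n(t_n*)^{1/n}/(2α) converges to h_max(α) − log(2α) as n → ∞. -/

import Mathlib

/-!
Let `Z(λ) = ∫₀¹ e^{-λs} ds` and let `m(λ)` be the mean of the density `e^{-λs} / Z(λ)` on `[0,1]`,
so that `m(μ) = α` and `h_max(α) = μ m(μ) + log Z(μ)`.

Upper bound: the mean of `∑ xᵢ` over `𝒯_n(t_n)` is `αn`, so Markov's inequality gives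
`V_n(t_n) ≤ γ / (γ - α) · V_n(γn)` for `γ > α`, and the Chernoff bound
`1_{∑ xᵢ ≤ γn} ≤ e^{μ (γn - ∑ xᵢ)}` on the cube gives `V_n(γn) ≤ e^{μγn} Z(μ)ⁿ`.

Lower bound: `t_n ≥ αn`, and `m(λ) < α` for `λ > μ`. Under the weight `∏ e^{-λ xᵢ}` on the cube,
of total mass `Z(λ)ⁿ`, the sum `∑ xᵢ` is centred at `n m(λ)` with variance at most `n`, so by
Chebyshev half of the mass lies in the window `|∑ xᵢ - n m(λ)| ≤ εn` once `ε² n ≥ 2`. There the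
weight is at most `e^{-λ (m(λ) - ε) n}`, whence `V_n((m(λ) + ε) n) ≥ e^{λ (m(λ) - ε) n} Z(λ)ⁿ / 2`.

Letting `γ → α`, `λ → μ`, `ε → 0` and using the continuity of `λ ↦ λ m(λ) + log Z(λ)` gives the
limit.
-/

open MeasureTheory Filter

/-- The truncated cube `𝒯_n(t) = {x ∈ [0,1]^n : ∑ i, x i ≤ t}`. -/
def truncCube (n : ℕ) (t : ℝ) : Set (Fin n → ℝ) :=
  {x | (∀ i, x i ∈ Set.Icc (0 : ℝ) 1) ∧ ∑ i, x i ≤ t}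

/-- Volume of the truncated cube. -/
noncomputable def truncVol (n : ℕ) (t : ℝ) : ℝ :=
  (volume (truncCube n t)).toReal

/-- Average first moment of the truncated cube. -/
noncomputable def truncMoment (n : ℕ) (t : ℝ) : ℝ :=
  (1 / (n * truncVol n t)) * ∫ x in truncCube n t, ∑ i, x i

open Real Set Topology

-- For `l = μ*`, `tiltWeight l / tiltPartition l` is the density `p*`, `tiltMean l` is its mean
-- and `tiltEntropy l` its differential entropy.
noncomputable section

def tiltWeight (l : ℝ) : ℝ → ℝ := (Icc 0 1).indicator fun s => exp (-(l * s))

def tiltPartition (l : ℝ) : ℝ := (1 - exp (-l)) / l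

def tiltMean (l : ℝ) : ℝ := 1 / l - 1 / (exp l - 1)

def tiltEntropy (l : ℝ) : ℝ := l * tiltMean l + log (tiltPartition l)

end

lemma tiltWeight_nonneg (l s : ℝ) : 0 ≤ tiltWeight l s :=
  indicator_nonneg (fun _ _ => (exp_pos _).le) s

lemma tiltWeight_mul_eq_indicator (l : ℝ) (f : ℝ → ℝ) :
    (fun s => tiltWeight l s * f s) = (Icc 0 1).indicator fun s => exp (-(l * s)) * f s := by
  ext s
  exact (indicator_mul_left _ _ _).symm

lemma integrable_tiltWeight_mul (l : ℝ) {f : ℝ → ℝ} (hf : Continuous f) :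
    Integrable fun s => tiltWeight l s * f s := by
  rw [tiltWeight_mul_eq_indicator, integrable_indicator_iff measurableSet_Icc]
  exact (by fun_prop : Continuous _).integrableOn_Icc

lemma integral_tiltWeight_mul (l : ℝ) (f : ℝ → ℝ) :
    ∫ s, tiltWeight l s * f s = ∫ s in (0 : ℝ)..1, exp (-(l * s)) * f s := by
  rw [tiltWeight_mul_eq_indicator, integral_indicator measurableSet_Icc,
    integral_Icc_eq_integral_Ioc, intervalIntegral.integral_of_le zero_le_one]

lemma integrable_tiltWeight (l : ℝ) : Integrable (tiltWeight l) := by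
  simpa using integrable_tiltWeight_mul l (f := fun _ => 1) continuous_const

lemma integral_tiltWeight {l : ℝ} (hl : l ≠ 0) : ∫ s, tiltWeight l s = tiltPartition l := by
  have hderiv (s : ℝ) : HasDerivAt (fun s => -exp (-(l * s)) / l) (exp (-(l * s))) s := by
    refine (((hasDerivAt_id' s).const_mul l).fun_neg.exp.fun_neg.div_const l).congr_deriv ?_
    field_simp
  have h := integral_tiltWeight_mul l (fun _ => 1)
  simp only [mul_one] at h
  rw [h, intervalIntegral.integral_eq_sub_of_hasDerivAt (fun s _ => hderiv s)
      ((by fun_prop : Continuous _).intervalIntegrable _ _), tiltPartition]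
  simp
  ring

lemma integral_tiltWeight_mul_sub_tiltMean {l : ℝ} (hl : l ≠ 0) :
    ∫ s, tiltWeight l s * (s - tiltMean l) = 0 := by
  set m := tiltMean l
  have hderiv (s : ℝ) : HasDerivAt (fun s => -((s - m) / l + 1 / l ^ 2) * exp (-(l * s)))
      (exp (-(l * s)) * (s - m)) s := by
    refine (((((hasDerivAt_id' s).sub_const m).div_const l).add_const (1 / l ^ 2)).fun_neg.fun_mul
      ((hasDerivAt_id' s).const_mul l).fun_neg.exp).congr_deriv ?_
    field_simp
    ring
  have hE : exp l - 1 ≠ 0 := sub_ne_zero.2 (by simpa using hl)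
  rw [integral_tiltWeight_mul, intervalIntegral.integral_eq_sub_of_hasDerivAt (fun s _ => hderiv s)
      ((by fun_prop : Continuous _).intervalIntegrable _ _)]
  simp only [m, tiltMean, exp_neg, mul_one, mul_zero, neg_zero, exp_zero]
  field_simp
  ring

lemma integral_tiltWeight_mul_sub_sq_le (l : ℝ) {a : ℝ} (ha : a ∈ Icc (0 : ℝ) 1) :
    ∫ s, tiltWeight l s * (s - a) ^ 2 ≤ ∫ s, tiltWeight l s := by
  refine integral_mono (integrable_tiltWeight_mul l (by fun_prop)) (integrable_tiltWeight l)
    fun s => ?_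
  by_cases hs : s ∈ Icc (0 : ℝ) 1
  · have : (s - a) ^ 2 ≤ 1 := by nlinarith [hs.1, hs.2, ha.1, ha.2]
    simpa using mul_le_mul_of_nonneg_left this (tiltWeight_nonneg l s)
  · simp [tiltWeight, hs]

lemma tiltPartition_pos {l : ℝ} (hl : 0 < l) : 0 < tiltPartition l :=
  div_pos (sub_pos.2 (exp_lt_one_iff.2 (neg_lt_zero.2 hl))) hl

lemma tiltMean_pos {l : ℝ} (hl : 0 < l) : 0 < tiltMean l :=
  sub_pos.2 (one_div_lt_one_div_of_lt hl (by linarith [add_one_lt_exp hl.ne']))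

lemma tiltMean_lt_one {l : ℝ} (hl : 0 < l) : tiltMean l < 1 := by
  have h1 := add_one_lt_exp (neg_ne_zero.2 hl.ne')
  have h2 := add_one_lt_exp hl.ne'
  have h3 : exp l * exp (-l) = 1 := by rw [← exp_add]; simp
  rw [tiltMean, div_sub_div _ _ hl.ne' (by linarith), div_lt_one (by nlinarith)]
  nlinarith

lemma sq_mul_exp_lt_sq_exp_sub_one {x : ℝ} (hx : 0 < x) : x ^ 2 * exp x < (exp x - 1) ^ 2 := by
  have hsinh : x / 2 < sinh (x / 2) := self_lt_sinh_iff.2 (by linarith)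
  have hsplit : exp x = exp (x / 2) ^ 2 := by rw [← exp_nat_mul]; ring_nf
  have hinv : exp (x / 2) * exp (-(x / 2)) = 1 := by rw [← exp_add]; simp
  rw [sinh_eq] at hsinh
  have hkey : x * exp (x / 2) < exp x - 1 := by nlinarith [exp_pos (x / 2)]
  nlinarith [mul_pos hx (exp_pos (x / 2))]

lemma hasDerivAt_tiltMean {x : ℝ} (hx : x ≠ 0) :
    HasDerivAt tiltMean (-(x ^ 2)⁻¹ + exp x / (exp x - 1) ^ 2) x := by
  have hE : exp x - 1 ≠ 0 := sub_ne_zero.2 (by simpa using hx)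
  have hf : tiltMean = fun y => y⁻¹ - (exp y - 1)⁻¹ := by ext y; simp [tiltMean]
  rw [hf]
  refine ((hasDerivAt_inv hx).fun_sub (((hasDerivAt_exp x).sub_const 1).fun_inv hE)).congr_deriv ?_
  ring

lemma tiltMean_strictAntiOn : StrictAntiOn tiltMean (Ioi 0) := by
  refine strictAntiOn_of_hasDerivWithinAt_neg (convex_Ioi 0)
    (fun x hx => (hasDerivAt_tiltMean (ne_of_gt hx)).continuousAt.continuousWithinAt)
    (fun x hx => (hasDerivAt_tiltMean (ne_of_gt (interior_subset hx))).hasDerivWithinAt) ?_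
  intro x hx
  rw [interior_Ioi, mem_Ioi] at hx
  have hE : 0 < (exp x - 1) ^ 2 := pow_pos (sub_pos.2 (one_lt_exp_iff.2 hx)) 2
  have : exp x / (exp x - 1) ^ 2 < (x ^ 2)⁻¹ := by
    rw [div_lt_iff₀ hE, inv_mul_eq_div, lt_div_iff₀ (by positivity)]
    linarith [sq_mul_exp_lt_sq_exp_sub_one hx]
  linarith

lemma continuousAt_tiltEntropy {l : ℝ} (hl : 0 < l) : ContinuousAt tiltEntropy l := by
  have hl0 := hl.ne'
  have hE : exp l - 1 ≠ 0 := sub_ne_zero.2 (by simpa using hl.ne')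
  have hZ := (tiltPartition_pos hl).ne'
  unfold tiltEntropy tiltMean
  unfold tiltPartition at hZ ⊢
  fun_prop (disch := assumption)

lemma prod_mul_sum_sq_eq_sum_sum_prod {ι E : Type*} [Fintype ι] [DecidableEq ι] (w φ : E → ℝ)
    (x : ι → E) :
    (∏ k, w (x k)) * (∑ i, φ (x i)) ^ 2 =
      ∑ i, ∑ j, ∏ k, w (x k) * (if k = i then φ (x k) else 1) * (if k = j then φ (x k) else 1) := by
  rw [sq, Finset.sum_mul_sum, Finset.mul_sum]
  refine Finset.sum_congr rfl fun i _ => ?_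
  rw [Finset.mul_sum]
  refine Finset.sum_congr rfl fun j _ => ?_
  simp only [Finset.prod_mul_distrib, Finset.prod_ite_eq', Finset.mem_univ, if_true]
  ring

section ProductMoments

variable {E : Type*} [MeasurableSpace E] {μ : Measure E} {w φ : E → ℝ}

lemma integrable_mul_ite_mul_ite (hw : Integrable w μ) (hwφ : Integrable (fun s => w s * φ s) μ)
    (hwφ2 : Integrable (fun s => w s * φ s ^ 2) μ) (p q : Prop) [Decidable p] [Decidable q] :
    Integrable (fun s => w s * (if p then φ s else 1) * (if q then φ s else 1)) μ := by
  split_ifs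
  · simpa [mul_assoc, sq] using hwφ2
  all_goals simpa using ‹_›

variable {ι : Type*} [Fintype ι] [SigmaFinite μ]

lemma integrable_prod_mul_sum_sq (hw : Integrable w μ) (hwφ : Integrable (fun s => w s * φ s) μ)
    (hwφ2 : Integrable (fun s => w s * φ s ^ 2) μ) :
    Integrable (fun x : ι → E => (∏ k, w (x k)) * (∑ i, φ (x i)) ^ 2) (Measure.pi fun _ => μ) := by
  classical
  simp_rw [prod_mul_sum_sq_eq_sum_sum_prod]
  exact integrable_finsetSum _ fun i _ => integrable_finsetSum _ fun j _ =>
    Integrable.fintype_prod fun k => integrable_mul_ite_mul_ite hw hwφ hwφ2 _ _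

theorem integral_prod_mul_sum_sq (hw : Integrable w μ) (hwφ : Integrable (fun s => w s * φ s) μ)
    (hwφ2 : Integrable (fun s => w s * φ s ^ 2) μ) (hcenter : ∫ s, w s * φ s ∂μ = 0) :
    ∫ x : ι → E, (∏ k, w (x k)) * (∑ i, φ (x i)) ^ 2 ∂(Measure.pi fun _ => μ) =
      Fintype.card ι * (∫ s, w s * φ s ^ 2 ∂μ) * (∫ s, w s ∂μ) ^ (Fintype.card ι - 1) := by
  classical
  -- Off-diagonal terms vanish because `w φ` has integral zero.
  have hterm (i j : ι) : ∫ x : ι → E, ∏ k, w (x k) * (if k = i then φ (x k) else 1) *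
      (if k = j then φ (x k) else 1) ∂(Measure.pi fun _ => μ) =
      if i = j then (∫ s, w s * φ s ^ 2 ∂μ) * (∫ s, w s ∂μ) ^ (Fintype.card ι - 1) else 0 := by
    rw [integral_fintype_prod_eq_prod (E := fun _ => E)
      (fun k s => w s * (if k = i then φ s else 1) * (if k = j then φ s else 1))]
    split_ifs with hij
    · subst hij
      have hrest : ∀ k ∈ ({i}ᶜ : Finset ι),
          ∫ s, w s * (if k = i then φ s else 1) * (if k = i then φ s else 1) ∂μ = ∫ s, w s ∂μ :=
        fun k hk => by simp [show k ≠ i by simpa using hk]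
      rw [Fintype.prod_eq_mul_prod_compl i, Finset.prod_congr rfl hrest, Finset.prod_const,
        Finset.card_compl, Finset.card_singleton]
      simp [mul_assoc, sq]
    · exact Finset.prod_eq_zero (Finset.mem_univ i) (by simpa [hij] using hcenter)
  simp_rw [prod_mul_sum_sq_eq_sum_sum_prod]
  rw [integral_finsetSum _ fun i _ => integrable_finsetSum _ fun j _ =>
    Integrable.fintype_prod fun k => integrable_mul_ite_mul_ite hw hwφ hwφ2 _ _]
  simp_rw [integral_finsetSum _ fun j _ =>
    Integrable.fintype_prod fun k => integrable_mul_ite_mul_ite hw hwφ hwφ2 _ _, hterm]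
  simp [Finset.sum_ite_eq]
  ring

end ProductMoments

lemma prod_tiltWeight_of_forall_mem {ι : Type*} [Fintype ι] (l : ℝ) {x : ι → ℝ}
    (hx : ∀ i, x i ∈ Icc (0 : ℝ) 1) : ∏ i, tiltWeight l (x i) = exp (-(l * ∑ i, x i)) := by
  simp [tiltWeight, hx, ← exp_sum, Finset.mul_sum]

lemma prod_tiltWeight_of_not_forall_mem {ι : Type*} [Fintype ι] (l : ℝ) {x : ι → ℝ}
    (hx : ¬∀ i, x i ∈ Icc (0 : ℝ) 1) : ∏ i, tiltWeight l (x i) = 0 := by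
  obtain ⟨i, hi⟩ := not_forall.1 hx
  exact Finset.prod_eq_zero (Finset.mem_univ i) (indicator_of_notMem hi _)

lemma integrable_prod_tiltWeight (ι : Type*) [Fintype ι] (l : ℝ) :
    Integrable fun x : ι → ℝ => ∏ i, tiltWeight l (x i) :=
  Integrable.fintype_prod fun _ => integrable_tiltWeight l

lemma integral_prod_tiltWeight (ι : Type*) [Fintype ι] {l : ℝ} (hl : l ≠ 0) :
    ∫ x : ι → ℝ, ∏ i, tiltWeight l (x i) = tiltPartition l ^ Fintype.card ι := by
  rw [← integral_tiltWeight hl]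
  exact integral_fintype_prod_eq_pow _

lemma integrable_prod_tiltWeight_mul_sum_sq (ι : Type*) [Fintype ι] (l m : ℝ) :
    Integrable fun x : ι → ℝ => (∏ k, tiltWeight l (x k)) * (∑ i, (x i - m)) ^ 2 := by
  classical
  rw [volume_pi]
  exact integrable_prod_mul_sum_sq (φ := fun s => s - m) (integrable_tiltWeight l)
    (integrable_tiltWeight_mul l (by fun_prop)) (integrable_tiltWeight_mul l (by fun_prop))

theorem integral_prod_tiltWeight_mul_sum_sq_le (ι : Type*) [Fintype ι] {l : ℝ} (hl : 0 < l) :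
    ∫ x : ι → ℝ, (∏ k, tiltWeight l (x k)) * (∑ i, (x i - tiltMean l)) ^ 2 ≤
      Fintype.card ι * tiltPartition l ^ Fintype.card ι := by
  classical
  have hm : tiltMean l ∈ Icc (0 : ℝ) 1 := ⟨(tiltMean_pos hl).le, (tiltMean_lt_one hl).le⟩
  rw [volume_pi, integral_prod_mul_sum_sq (φ := fun s => s - tiltMean l) (integrable_tiltWeight l)
    (integrable_tiltWeight_mul l (by fun_prop)) (integrable_tiltWeight_mul l (by fun_prop))
    (integral_tiltWeight_mul_sub_tiltMean hl.ne'), integral_tiltWeight hl.ne']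
  rcases Nat.eq_zero_or_pos (Fintype.card ι) with h | h
  · simp [h]
  have hZ := (tiltPartition_pos hl).le
  have hJ := integral_tiltWeight_mul_sub_sq_le l hm
  rw [integral_tiltWeight hl.ne'] at hJ
  calc (Fintype.card ι : ℝ) * (∫ s, tiltWeight l s * (s - tiltMean l) ^ 2) *
        tiltPartition l ^ (Fintype.card ι - 1)
      ≤ Fintype.card ι * tiltPartition l * tiltPartition l ^ (Fintype.card ι - 1) := by gcongr
    _ = Fintype.card ι * tiltPartition l ^ Fintype.card ι := by
      rw [mul_assoc, ← pow_succ', Nat.sub_add_cancel h]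

lemma truncCube_eq_inter (n : ℕ) (t : ℝ) :
    truncCube n t = (univ.pi fun _ => Icc 0 1) ∩ {x | ∑ i, x i ≤ t} := by
  ext x
  simp only [truncCube, mem_inter_iff, Set.mem_pi, mem_univ, true_implies, mem_ofPred_eq]

lemma isCompact_truncCube (n : ℕ) (t : ℝ) : IsCompact (truncCube n t) := by
  rw [truncCube_eq_inter]
  exact (isCompact_univ_pi fun _ => isCompact_Icc).inter_right
    (isClosed_le (by fun_prop) continuous_const)

lemma measurableSet_truncCube (n : ℕ) (t : ℝ) : MeasurableSet (truncCube n t) :=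
  (isCompact_truncCube n t).isClosed.measurableSet

lemma truncVol_eq_integral_indicator (n : ℕ) (t : ℝ) :
    truncVol n t = ∫ x, (truncCube n t).indicator 1 x := by
  rw [integral_indicator_one (measurableSet_truncCube n t)]
  rfl

lemma integrable_indicator_truncCube (n : ℕ) (t : ℝ) :
    Integrable ((truncCube n t).indicator (1 : (Fin n → ℝ) → ℝ)) :=
  (integrable_indicator_iff (measurableSet_truncCube n t)).2
    (integrableOn_const (isCompact_truncCube n t).measure_lt_top.ne)

lemma truncVol_mono (n : ℕ) {s t : ℝ} (hst : s ≤ t) : truncVol n s ≤ truncVol n t :=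
  ENNReal.toReal_mono (isCompact_truncCube n t).measure_lt_top.ne
    (measure_mono fun _ hx => ⟨hx.1, hx.2.trans hst⟩)

lemma truncVol_pos {n : ℕ} (hn : 0 < n) {t : ℝ} (ht : 0 < t) : 0 < truncVol n t := by
  set c := min 1 (t / n)
  have hc : 0 < c := lt_min one_pos (by positivity)
  have hsub : (univ.pi fun _ : Fin n => Icc 0 c) ⊆ truncCube n t := fun x hx => by
    simp only [Set.mem_pi, mem_univ, true_implies] at hx
    refine ⟨fun i => ⟨(hx i).1, (hx i).2.trans (min_le_left _ _)⟩, ?_⟩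
    calc ∑ i, x i ≤ ∑ _i : Fin n, t / n :=
          Finset.sum_le_sum fun i _ => (hx i).2.trans (min_le_right _ _)
      _ = t := by simp; field_simp
  refine ENNReal.toReal_pos (ne_of_gt ?_) (isCompact_truncCube n t).measure_lt_top.ne
  calc 0 < volume (univ.pi fun _ : Fin n => Icc 0 c) := by
        rw [volume_pi_pi]; simpa [Real.volume_Icc] using ENNReal.pow_pos (ENNReal.ofReal_pos.2 hc) n
    _ ≤ _ := measure_mono hsub

lemma indicator_truncCube_le_exp_mul_prod_tiltWeight {n : ℕ} {l : ℝ} (hl : 0 ≤ l) (t : ℝ)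
    (x : Fin n → ℝ) :
    (truncCube n t).indicator 1 x ≤ exp (l * t) * ∏ i, tiltWeight l (x i) := by
  by_cases hx : x ∈ truncCube n t
  · rw [indicator_of_mem hx, prod_tiltWeight_of_forall_mem l hx.1, ← exp_add]
    exact one_le_exp (by nlinarith [hx.2])
  · rw [indicator_of_notMem hx]
    exact mul_nonneg (exp_pos _).le (Finset.prod_nonneg fun i _ => tiltWeight_nonneg l (x i))

theorem truncVol_le_exp_mul_tiltPartition_pow {n : ℕ} {l : ℝ} (hl : 0 < l) (t : ℝ) :
    truncVol n t ≤ exp (l * t) * tiltPartition l ^ n := by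
  calc truncVol n t = ∫ x, (truncCube n t).indicator 1 x := truncVol_eq_integral_indicator n t
    _ ≤ ∫ x : Fin n → ℝ, exp (l * t) * ∏ i, tiltWeight l (x i) :=
      integral_mono (integrable_indicator_truncCube n t)
        ((integrable_prod_tiltWeight _ l).const_mul _)
        (indicator_truncCube_le_exp_mul_prod_tiltWeight hl.le t)
    _ = exp (l * t) * tiltPartition l ^ n := by
      rw [integral_const_mul, integral_prod_tiltWeight _ hl.ne', Fintype.card_fin]

lemma prod_tiltWeight_le_exp_mul_indicator_add {n : ℕ} {l ε : ℝ} (hl : 0 ≤ l) (hε : 0 < ε)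
    (hn : 0 < n) (m : ℝ) (x : Fin n → ℝ) :
    ∏ i, tiltWeight l (x i) ≤
      exp (-(l * ((m - ε) * n))) * (truncCube n ((m + ε) * n)).indicator 1 x +
        (∏ i, tiltWeight l (x i)) * (∑ i, (x i - m)) ^ 2 / (ε * n) ^ 2 := by
  have hw : 0 ≤ ∏ i, tiltWeight l (x i) := Finset.prod_nonneg fun i _ => tiltWeight_nonneg l (x i)
  have hεn : 0 < ε * n := by positivity
  have hsum : ∑ i, (x i - m) = ∑ i, x i - n * m := by simp [Finset.sum_sub_distrib]
  have hind : 0 ≤ exp (-(l * ((m - ε) * n))) * (truncCube n ((m + ε) * n)).indicator 1 x :=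
    mul_nonneg (exp_pos _).le (indicator_nonneg (fun _ _ => zero_le_one) x)
  by_cases hcube : ∀ i, x i ∈ Icc (0 : ℝ) 1
  swap
  · rw [prod_tiltWeight_of_not_forall_mem l hcube]
    simpa using hind
  by_cases hwin : |∑ i, x i - n * m| ≤ ε * n
  · obtain ⟨hlow, hupp⟩ := abs_le.1 hwin
    have hmem : x ∈ truncCube n ((m + ε) * n) := ⟨hcube, by linarith⟩
    rw [indicator_of_mem hmem, prod_tiltWeight_of_forall_mem l hcube, Pi.one_apply, mul_one]
    have : exp (-(l * ∑ i, x i)) ≤ exp (-(l * ((m - ε) * n))) :=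
      exp_le_exp.2 (by nlinarith)
    have : 0 ≤ exp (-(l * ∑ i, x i)) * (∑ i, (x i - m)) ^ 2 / (ε * n) ^ 2 := by positivity
    linarith
  · have hdev : (ε * n) ^ 2 ≤ (∑ i, (x i - m)) ^ 2 := by
      rw [hsum, ← sq_abs (∑ i, x i - n * m)]
      exact pow_le_pow_left₀ hεn.le (not_le.1 hwin).le 2
    have : ∏ i, tiltWeight l (x i) ≤
        (∏ i, tiltWeight l (x i)) * (∑ i, (x i - m)) ^ 2 / (ε * n) ^ 2 := by
      rw [le_div_iff₀ (by positivity)]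
      exact mul_le_mul_of_nonneg_left hdev hw
    linarith

lemma tiltPartition_pow_le_exp_mul_truncVol_add {n : ℕ} {l ε : ℝ} (hl : 0 < l) (hε : 0 < ε)
    (hn : 0 < n) :
    tiltPartition l ^ n ≤ exp (-(l * ((tiltMean l - ε) * n))) *
        truncVol n ((tiltMean l + ε) * n) + n * tiltPartition l ^ n / (ε * n) ^ 2 := by
  set m := tiltMean l
  have hvar := integral_prod_tiltWeight_mul_sum_sq_le (Fin n) hl
  rw [Fintype.card_fin] at hvar
  have hint := (integrable_prod_tiltWeight_mul_sum_sq (Fin n) l m).div_const ((ε * n) ^ 2)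
  calc tiltPartition l ^ n = ∫ x : Fin n → ℝ, ∏ i, tiltWeight l (x i) := by
        rw [integral_prod_tiltWeight _ hl.ne', Fintype.card_fin]
    _ ≤ ∫ x, exp (-(l * ((m - ε) * n))) * (truncCube n ((m + ε) * n)).indicator 1 x +
          (∏ i, tiltWeight l (x i)) * (∑ i, (x i - m)) ^ 2 / (ε * n) ^ 2 :=
      integral_mono (integrable_prod_tiltWeight _ l)
        (((integrable_indicator_truncCube n _).const_mul _).add hint)
        (prod_tiltWeight_le_exp_mul_indicator_add hl.le hε hn m)
    _ ≤ _ := by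
      rw [integral_add ((integrable_indicator_truncCube n _).const_mul _) hint,
        integral_const_mul, integral_div, ← truncVol_eq_integral_indicator]
      gcongr

theorem exp_mul_tiltPartition_pow_div_two_le_truncVol {n : ℕ} {l ε : ℝ} (hl : 0 < l) (hε : 0 < ε)
    (hn : 2 ≤ ε ^ 2 * n) :
    exp (l * (tiltMean l - ε) * n) * tiltPartition l ^ n / 2 ≤
      truncVol n ((tiltMean l + ε) * n) := by
  set m := tiltMean l
  set Z := tiltPartition l
  have hn0 : 0 < n := Nat.pos_of_ne_zero (by rintro rfl; norm_num at hn)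
  have hbound := tiltPartition_pow_le_exp_mul_truncVol_add hl hε hn0
  have hZn : 0 < Z ^ n := pow_pos (tiltPartition_pos hl) n
  have hhalf : n * Z ^ n / (ε * n) ^ 2 ≤ Z ^ n / 2 := by
    rw [div_le_div_iff₀ (by positivity) two_pos]
    nlinarith [mul_le_mul_of_nonneg_left hn (by positivity : (0 : ℝ) ≤ n * Z ^ n)]
  calc exp (l * (m - ε) * n) * Z ^ n / 2 = exp (l * (m - ε) * n) * (Z ^ n / 2) := by ring
    _ ≤ exp (l * (m - ε) * n) * (exp (-(l * ((m - ε) * n))) * truncVol n ((m + ε) * n)) := by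
      gcongr
      linarith
    _ = truncVol n ((m + ε) * n) := by
      rw [← mul_assoc, ← exp_add, show l * (m - ε) * n + -(l * ((m - ε) * n)) = 0 by ring,
        exp_zero, one_mul]

lemma integrableOn_sum_truncCube (n : ℕ) (t : ℝ) :
    IntegrableOn (fun x : Fin n → ℝ => ∑ i, x i) (truncCube n t) :=
  ContinuousOn.integrableOn_compact (isCompact_truncCube n t) (by fun_prop)

lemma integral_sum_truncCube_of_truncMoment {n : ℕ} {t α : ℝ} (hn : n ≠ 0)
    (hV : truncVol n t ≠ 0) (h : truncMoment n t = α) :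
    ∫ x in truncCube n t, ∑ i, x i = α * n * truncVol n t := by
  rw [← h, truncMoment]
  field_simp

lemma mul_le_of_integral_sum_truncCube_eq {n : ℕ} {t α : ℝ} (hV : 0 < truncVol n t)
    (h : ∫ x in truncCube n t, ∑ i, x i = α * n * truncVol n t) : α * n ≤ t := by
  have : ∫ x in truncCube n t, ∑ i, x i ≤ ∫ _ in truncCube n t, t :=
    setIntegral_mono_on (integrableOn_sum_truncCube n t)
      (integrableOn_const (isCompact_truncCube n t).measure_lt_top.ne)
      (measurableSet_truncCube n t) fun x hx => hx.2
  rw [setIntegral_const, smul_eq_mul, h] at this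
  exact le_of_mul_le_mul_right (by rwa [mul_comm t]) hV

lemma indicator_truncCube_le_add_indicator_sum_div {n : ℕ} {t c : ℝ} (hc : 0 < c)
    (x : Fin n → ℝ) :
    (truncCube n t).indicator 1 x ≤
      (truncCube n c).indicator 1 x + (truncCube n t).indicator (fun x => (∑ i, x i) / c) x := by
  by_cases hx : x ∈ truncCube n t
  · rw [indicator_of_mem hx, indicator_of_mem hx]
    by_cases hxc : ∑ i, x i ≤ c
    · rw [indicator_of_mem (show x ∈ truncCube n c from ⟨hx.1, hxc⟩)]
      have : 0 ≤ (∑ i, x i) / c := div_nonneg (Finset.sum_nonneg fun i _ => (hx.1 i).1) hc.le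
      simpa using this
    · have : 1 ≤ (∑ i, x i) / c := by rw [le_div_iff₀ hc]; linarith
      have : 0 ≤ (truncCube n c).indicator (1 : (Fin n → ℝ) → ℝ) x :=
        indicator_nonneg (fun _ _ => zero_le_one) x
      simp only [Pi.one_apply]
      linarith
  · rw [indicator_of_notMem hx, indicator_of_notMem hx, add_zero]
    exact indicator_nonneg (fun _ _ => zero_le_one) x

lemma sub_mul_truncVol_le {n : ℕ} {t α γ : ℝ} (hn : 0 < n) (hγ : 0 < γ)
    (h : ∫ x in truncCube n t, ∑ i, x i = α * n * truncVol n t) :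
    (γ - α) * truncVol n t ≤ γ * truncVol n (γ * n) := by
  have hγn : 0 < γ * n := by positivity
  have hint : Integrable ((truncCube n t).indicator fun x => (∑ i, x i) / (γ * n)) :=
    IntegrableOn.integrable_indicator ((integrableOn_sum_truncCube n t).div_const _)
      (measurableSet_truncCube n t)
  have hmarkov : truncVol n t ≤ truncVol n (γ * n) + α * n * truncVol n t / (γ * n) :=
    calc truncVol n t = ∫ x, (truncCube n t).indicator 1 x := truncVol_eq_integral_indicator n t
      _ ≤ ∫ x, (truncCube n (γ * n)).indicator 1 x +
            (truncCube n t).indicator (fun x => (∑ i, x i) / (γ * n)) x :=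
        integral_mono (integrable_indicator_truncCube n t)
          ((integrable_indicator_truncCube n _).add hint)
          (indicator_truncCube_le_add_indicator_sum_div hγn)
      _ = truncVol n (γ * n) + α * n * truncVol n t / (γ * n) := by
        rw [integral_add (integrable_indicator_truncCube n _) hint,
          integral_indicator (measurableSet_truncCube n t), integral_div, h,
          ← truncVol_eq_integral_indicator]
  have hcancel : α * n * truncVol n t / (γ * n) * γ = α * truncVol n t := by field_simp
  nlinarith [mul_le_mul_of_nonneg_left hmarkov hγ.le]

lemma tendsto_one_div_mul_log_mul_exp_mul_pow {c a z : ℝ} (hc : 0 < c) (hz : 0 < z) :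
    Tendsto (fun n : ℕ => (1 / n : ℝ) * log (c * exp (a * n) * z ^ n)) atTop (𝓝 (a + log z)) := by
  have h : Tendsto (fun n : ℕ => log c / n + (a + log z)) atTop (𝓝 (a + log z)) := by
    simpa using (tendsto_const_div_atTop_nhds_zero_nat (log c)).add_const (a + log z)
  refine h.congr' ((eventually_ne_atTop 0).mono fun n hn => ?_)
  dsimp only
  rw [log_mul (by positivity) (by positivity), log_mul hc.ne' (exp_pos _).ne', log_exp, log_pow]
  field_simp
  ring

section Limit

variable {μ : ℝ} {t : ℕ → ℝ}

theorem eventually_one_div_mul_log_truncVol_lt (hμ : 0 < μ)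
    (ht : ∀ n : ℕ, 1 ≤ n → 0 < t n ∧ truncMoment n (t n) = tiltMean μ) {b : ℝ}
    (hb : tiltEntropy μ < b) :
    ∀ᶠ n : ℕ in atTop, (1 / n : ℝ) * log (truncVol n (t n)) < b := by
  set α := tiltMean μ
  set γ := α + (b - tiltEntropy μ) / (2 * μ)
  have hαγ : α < γ := lt_add_of_pos_right α (div_pos (sub_pos.2 hb) (by positivity))
  have hγ : 0 < γ := (tiltMean_pos hμ).trans hαγ
  have hC : 0 < γ / (γ - α) := div_pos hγ (sub_pos.2 hαγ)
  have hlim : μ * γ + log (tiltPartition μ) < b := by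
    have : μ * γ + log (tiltPartition μ) = tiltEntropy μ + (b - tiltEntropy μ) / 2 := by
      simp only [γ, tiltEntropy, α]
      field_simp
      ring
    linarith
  filter_upwards [(tendsto_one_div_mul_log_mul_exp_mul_pow hC
    (tiltPartition_pos hμ)).eventually_lt_const hlim, eventually_ge_atTop 1] with n hlt hn
  obtain ⟨htn, hmom⟩ := ht n hn
  have hV := truncVol_pos hn htn
  have hmean := integral_sum_truncCube_of_truncMoment (by omega) hV.ne' hmom
  refine lt_of_le_of_lt (mul_le_mul_of_nonneg_left (log_le_log hV ?_) (by positivity)) hlt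
  calc truncVol n (t n) ≤ γ / (γ - α) * truncVol n (γ * n) := by
        rw [div_mul_eq_mul_div, le_div_iff₀ (sub_pos.2 hαγ)]
        linarith [sub_mul_truncVol_le hn hγ hmean]
    _ ≤ γ / (γ - α) * (exp (μ * (γ * n)) * tiltPartition μ ^ n) :=
        mul_le_mul_of_nonneg_left (truncVol_le_exp_mul_tiltPartition_pow hμ _) hC.le
    _ = γ / (γ - α) * exp (μ * γ * n) * tiltPartition μ ^ n := by ring_nf

theorem eventually_lt_one_div_mul_log_truncVol (hμ : 0 < μ)
    (ht : ∀ n : ℕ, 1 ≤ n → 0 < t n ∧ truncMoment n (t n) = tiltMean μ) {a : ℝ}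
    (ha : a < tiltEntropy μ) :
    ∀ᶠ n : ℕ in atTop, a < (1 / n : ℝ) * log (truncVol n (t n)) := by
  -- Tilting at `l > μ` pushes the mean below `tiltMean μ`, so that a Chebyshev window around it
  -- fits inside `truncCube n (tiltMean μ * n)`.
  obtain ⟨l, hal, hμl⟩ : ∃ l, a < tiltEntropy l ∧ μ < l :=
    ((((continuousAt_tiltEntropy hμ).eventually (lt_mem_nhds ha)).filter_mono
      nhdsWithin_le_nhds).and (self_mem_nhdsWithin (s := Ioi μ))).exists
  have hl : 0 < l := hμ.trans hμl
  have hmean_lt : tiltMean l < tiltMean μ := tiltMean_strictAntiOn hμ hl hμl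
  set ε := min (tiltMean μ - tiltMean l) ((tiltEntropy l - a) / (2 * l))
  have hε : 0 < ε := lt_min (sub_pos.2 hmean_lt) (div_pos (sub_pos.2 hal) (by positivity))
  have hε_le : ε ≤ tiltMean μ - tiltMean l := min_le_left _ _
  have hlim : a < l * (tiltMean l - ε) + log (tiltPartition l) := by
    have h : ε ≤ (tiltEntropy l - a) / (2 * l) := min_le_right _ _
    rw [le_div_iff₀ (by positivity)] at h
    simp only [tiltEntropy] at hal h
    nlinarith
  filter_upwards [(tendsto_one_div_mul_log_mul_exp_mul_pow one_half_pos
    (tiltPartition_pos hl)).eventually_const_lt hlim, eventually_ge_atTop 1,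
    tendsto_natCast_atTop_atTop.eventually_ge_atTop (2 / ε ^ 2)] with n hlt hn hnε
  obtain ⟨htn, hmom⟩ := ht n hn
  have hV := truncVol_pos hn htn
  have hαn : tiltMean μ * n ≤ t n := mul_le_of_integral_sum_truncCube_eq hV
    (integral_sum_truncCube_of_truncMoment (by omega) hV.ne' hmom)
  have hpos : 0 < 1 / 2 * exp (l * (tiltMean l - ε) * n) * tiltPartition l ^ n :=
    mul_pos (mul_pos one_half_pos (exp_pos _)) (pow_pos (tiltPartition_pos hl) n)
  refine hlt.trans_le (mul_le_mul_of_nonneg_left (log_le_log hpos ?_) (by positivity))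
  calc 1 / 2 * exp (l * (tiltMean l - ε) * n) * tiltPartition l ^ n
      = exp (l * (tiltMean l - ε) * n) * tiltPartition l ^ n / 2 := by ring
    _ ≤ truncVol n ((tiltMean l + ε) * n) := exp_mul_tiltPartition_pow_div_two_le_truncVol hl hε
        (by rwa [div_le_iff₀ (by positivity), mul_comm] at hnε)
    _ ≤ truncVol n (t n) := truncVol_mono n <| le_trans (by gcongr; linarith) hαn

theorem tendsto_one_div_mul_log_truncVol (hμ : 0 < μ)
    (ht : ∀ n : ℕ, 1 ≤ n → 0 < t n ∧ truncMoment n (t n) = tiltMean μ) :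
    Tendsto (fun n : ℕ => (1 / n : ℝ) * log (truncVol n (t n))) atTop (𝓝 (tiltEntropy μ)) :=
  tendsto_order.2 ⟨fun _ ha => eventually_lt_one_div_mul_log_truncVol hμ ht ha,
    fun _ hb => eventually_one_div_mul_log_truncVol_lt hμ ht hb⟩

end Limit

theorem log_max_shaping_gain_limit_general
    (α : ℝ)
    (μ : ℝ) (hμ : 0 < μ) (hμeq : α = 1 / μ - 1 / (Real.exp μ - 1))
    (t : ℕ → ℝ)
    (ht : ∀ n : ℕ, 1 ≤ n → t n ∈ Set.Ioo (0 : ℝ) n ∧ truncMoment n (t n) = α)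
    (hmax : ℝ) (hhmax : hmax = μ * α - Real.log (μ / (1 - Real.exp (-μ)))) :
    Tendsto (fun n : ℕ => (1 / (n : ℝ)) * Real.log (truncVol n (t n))) atTop
      (nhds hmax) ∧
    Tendsto (fun n : ℕ => Real.log (truncVol n (t n) ^ ((1 : ℝ) / n) / (2 * α)))
      atTop (nhds (hmax - Real.log (2 * α))) := by
  have hα : α = tiltMean μ := hμeq
  have hmax_eq : hmax = tiltEntropy μ := by
    rw [hhmax, tiltEntropy, ← hα, tiltPartition, ← inv_div, log_inv, sub_neg_eq_add]
  subst hα hmax_eq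
  have hlim := tendsto_one_div_mul_log_truncVol hμ fun n hn => ⟨(ht n hn).1.1, (ht n hn).2⟩
  refine ⟨hlim, (hlim.sub_const _).congr' ((eventually_ge_atTop 1).mono fun n hn => ?_)⟩
  have hV := truncVol_pos hn (ht n hn).1.1
  dsimp only
  rw [log_div (rpow_pos_of_pos hV _).ne' (mul_pos two_pos (tiltMean_pos hμ)).ne', log_rpow hV]

theorem log_max_shaping_gain_limit
    (α : ℝ) (hα : α ∈ Set.Ioo (0 : ℝ) (1 / 2))
    (μ : ℝ) (hμ : 0 < μ) (hμeq : α = 1 / μ - 1 / (Real.exp μ - 1))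
    (t : ℕ → ℝ)
    (ht : ∀ n : ℕ, 1 ≤ n → t n ∈ Set.Ioo (0 : ℝ) n ∧ truncMoment n (t n) = α)
    (hmax : ℝ) (hhmax : hmax = μ * α - Real.log (μ / (1 - Real.exp (-μ)))) :
    Tendsto (fun n : ℕ => (1 / (n : ℝ)) * Real.log (truncVol n (t n))) atTop
      (nhds hmax) ∧
    Tendsto (fun n : ℕ => Real.log (truncVol n (t n) ^ ((1 : ℝ) / n) / (2 * α)))
      atTop (nhds (hmax - Real.log (2 * α))) :=
  log_max_shaping_gain_limit_general α μ hμ hμeq t ht hmax hhmax
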